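/- Convergence of Algorithm 1 (Proposition 2(i)): let (Q^0, W^0) ∈ S_Z, assume Cs is bounded above on S_Z, set C_s^* = sup_{(Q,W)∈S_Z} Cs(Q,W), and suppose for every v ≥ 1 the triple (Q^v, W^v, t^v) is a maximizer of R(Q,t) over S_{Z,t}(Q^{v−1}, W^{v−1}). Then both real sequences v ↦ Cs(Q^v, W^v) and v ↦ R(Q^v, t^v) (for v ≥ 1) are monotone nondecreasing and bounded above by C_s^*, and hence each converges to a real limit. -/

import Mathlib

/-! Since `log det` is concave on positive definite matrices, its linearization `φ̄_k` at
`(Q', W')` bounds `φ_k` from above, so every triple feasible for the subproblem at `(Q', W')`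
has `R(Q, t) ≤ C_s(Q, W)`. The linearization is exact at its base point, so `(Q', W')` with
`t = max_k C_k(Q', W')` is feasible there, with objective value `C_s(Q', W')`. For the iterates
this gives `C_s(Z^(v-1)) ≤ R^v ≤ C_s(Z^v)`: both sequences are nondecreasing, bounded by
`C_s^*`, and they converge to the same limit. -/

open Matrix Finset ComplexOrder

namespace SRM

/-- `log det` of a complex matrix: real logarithm of the real part of the determinant. -/
noncomputable def phik {m n : ℕ} (H P : Matrix (Fin m) (Fin n) ℂ)
    (Q W : Matrix (Fin n) (Fin n) ℂ) : ℝ :=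
  Real.log ((1 + H * Q * Hᴴ + P * W * Pᴴ).det.re)

noncomputable def phiHat {m n : ℕ} (P : Matrix (Fin m) (Fin n) ℂ)
    (W : Matrix (Fin n) (Fin n) ℂ) : ℝ :=
  Real.log ((1 + P * W * Pᴴ).det.re)

/-- The `k`-th eavesdropper rate `C_k(Q,W)`. -/
noncomputable def Ceav {m n : ℕ} (H P : Matrix (Fin m) (Fin n) ℂ)
    (Q W : Matrix (Fin n) (Fin n) ℂ) : ℝ :=
  phik H P Q W - phiHat P W

/-- The legitimate (Alice-Bob) rate `C_0(Q)`. -/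
noncomputable def C0 {m n : ℕ} (H0 : Matrix (Fin m) (Fin n) ℂ)
    (Q : Matrix (Fin n) (Fin n) ℂ) : ℝ :=
  Real.log ((1 + H0 * Q * H0ᴴ).det.re)

/-- Gradient matrix `T_k(Q',W')`. -/
noncomputable def Tmat {m n : ℕ} (H P : Matrix (Fin m) (Fin n) ℂ)
    (Q' W' : Matrix (Fin n) (Fin n) ℂ) : Matrix (Fin n) (Fin n) ℂ :=
  Hᴴ * (1 + H * Q' * Hᴴ + P * W' * Pᴴ)⁻¹ * H

/-- Gradient matrix `R_k(Q',W')`. -/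
noncomputable def Rmat {m n : ℕ} (H P : Matrix (Fin m) (Fin n) ℂ)
    (Q' W' : Matrix (Fin n) (Fin n) ℂ) : Matrix (Fin n) (Fin n) ℂ :=
  Pᴴ * (1 + H * Q' * Hᴴ + P * W' * Pᴴ)⁻¹ * P

/-- Gradient of `φ̂_k` with respect to `W`. -/
noncomputable def Dmat {m n : ℕ} (P : Matrix (Fin m) (Fin n) ℂ)
    (W : Matrix (Fin n) (Fin n) ℂ) : Matrix (Fin n) (Fin n) ℂ :=
  Pᴴ * (1 + P * W * Pᴴ)⁻¹ * P

/-- Gradient of `C_0` with respect to `Q`. -/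
noncomputable def D0mat {m n : ℕ} (H0 : Matrix (Fin m) (Fin n) ℂ)
    (Q : Matrix (Fin n) (Fin n) ℂ) : Matrix (Fin n) (Fin n) ℂ :=
  H0ᴴ * (1 + H0 * Q * H0ᴴ)⁻¹ * H0

/-- First-order (linear) approximation `φ̄_k(Q,W | Q',W')` of `φ_k` around `(Q',W')`. -/
noncomputable def phiBar {m n : ℕ} (H P : Matrix (Fin m) (Fin n) ℂ)
    (Q W Q' W' : Matrix (Fin n) (Fin n) ℂ) : ℝ :=
  phik H P Q' W' + ((Tmat H P Q' W' * (Q - Q')).trace).re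
    + ((Rmat H P Q' W' * (W - W')).trace).re

/-- Convexified eavesdropper rate `C_{lk}(Q,W | Q',W')`. -/
noncomputable def Clk {m n : ℕ} (H P : Matrix (Fin m) (Fin n) ℂ)
    (Q W Q' W' : Matrix (Fin n) (Fin n) ℂ) : ℝ :=
  phiBar H P Q W Q' W' - phiHat P W

/-- Secrecy rate `C_s(Q,W) = C_0(Q) - max_k C_k(Q,W)`. -/
noncomputable def Cs {m0 n : ℕ} {K : Type*} [Fintype K] [Nonempty K] {mk : K → ℕ}
    (H0 : Matrix (Fin m0) (Fin n) ℂ)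
    (Hm Pm : (k : K) → Matrix (Fin (mk k)) (Fin n) ℂ)
    (Q W : Matrix (Fin n) (Fin n) ℂ) : ℝ :=
  C0 H0 Q - Finset.univ.sup' Finset.univ_nonempty (fun k => Ceav (Hm k) (Pm k) Q W)

/-- The feasible set `S_Z`. -/
def SZ {mg n : ℕ} (G : Matrix (Fin mg) (Fin n) ℂ) (V : Matrix (Fin n) (Fin n) ℂ)
    (Pmax Γ : ℝ) : Set (Matrix (Fin n) (Fin n) ℂ × Matrix (Fin n) (Fin n) ℂ) :=
  {Z | Z.1.PosSemidef ∧ Z.2.PosSemidef ∧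
    ((G * Z.1 * Gᴴ + G * V * Z.2 * Vᴴ * Gᴴ).trace).re ≤ Γ ∧
    ((Z.1 + Z.2).trace).re ≤ Pmax}

/-- The approximate feasible set `S_{Z,t}(Q',W')`. -/
def SZt {mg n : ℕ} {K : Type*} [Fintype K] {mk : K → ℕ}
    (G : Matrix (Fin mg) (Fin n) ℂ) (V : Matrix (Fin n) (Fin n) ℂ) (Pmax Γ : ℝ)
    (Hm Pm : (k : K) → Matrix (Fin (mk k)) (Fin n) ℂ)
    (Q' W' : Matrix (Fin n) (Fin n) ℂ) :
    Set ((Matrix (Fin n) (Fin n) ℂ × Matrix (Fin n) (Fin n) ℂ) × ℝ) :=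
  {x | x.1 ∈ SZ G V Pmax Γ ∧ ∀ k : K, Clk (Hm k) (Pm k) x.1.1 x.1.2 Q' W' ≤ x.2}

/-- The objective `R(Q,t) = C_0(Q) - t`. -/
noncomputable def Robj {m0 n : ℕ} (H0 : Matrix (Fin m0) (Fin n) ℂ)
    (Q : Matrix (Fin n) (Fin n) ℂ) (t : ℝ) : ℝ :=
  C0 H0 Q - t

end SRM

namespace Matrix

variable {ι : Type*} [Fintype ι] [DecidableEq ι]

lemma PosDef.re_det_pos {A : Matrix ι ι ℂ} (hA : A.PosDef) : 0 < A.det.re :=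
  (Complex.lt_def.1 hA.det_pos).1

lemma PosDef.ofReal_re_det {A : Matrix ι ι ℂ} (hA : A.PosDef) : (A.det.re : ℂ) = A.det :=
  Complex.ext rfl (Complex.lt_def.1 hA.det_pos).2

lemma PosDef.log_re_det_le_re_trace_sub_card {C : Matrix ι ι ℂ} (hC : C.PosDef) :
    Real.log C.det.re ≤ C.trace.re - Fintype.card ι := by
  have hev := hC.eigenvalues_pos
  have hdet : C.det.re = ∏ i, hC.isHermitian.eigenvalues i := by
    rw [hC.isHermitian.det_eq_prod_eigenvalues]; norm_cast
  have htr : C.trace.re = ∑ i, hC.isHermitian.eigenvalues i := by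
    rw [hC.isHermitian.trace_eq_sum_eigenvalues]; norm_cast
  rw [hdet, htr, Real.log_prod fun i _ => (hev i).ne']
  calc ∑ i, Real.log (hC.isHermitian.eigenvalues i)
      ≤ ∑ i, (hC.isHermitian.eigenvalues i - 1) :=
        Finset.sum_le_sum fun i _ => Real.log_le_sub_one_of_pos (hev i)
    _ = _ := by simp [Finset.sum_sub_distrib]

open scoped MatrixOrder in
/-- Apply the previous bound to `C = A^(-1/2) B A^(-1/2)`. -/
lemma PosDef.log_re_det_le_add_re_trace {A B : Matrix ι ι ℂ} (hA : A.PosDef) (hB : B.PosDef) :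
    Real.log B.det.re ≤ Real.log A.det.re + (A⁻¹ * (B - A)).trace.re := by
  set S := CFC.sqrt A⁻¹
  have hSS : S * S = A⁻¹ := CFC.sqrt_mul_sqrt_self _ hA.inv.posSemidef.nonneg
  have hS : S.IsHermitian := (nonneg_iff_posSemidef.mp (CFC.sqrt_nonneg _)).1
  have hSunit : IsUnit S :=
    (CFC.isUnit_sqrt_iff _ hA.inv.posSemidef.nonneg).2 (isUnit_nonsing_inv_iff.2 hA.isUnit)
  have hC : (S * B * S).PosDef := by
    simpa only [hS.eq] using hB.conjTranspose_mul_mul_same (mulVec_injective_iff_isUnit.2 hSunit)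
  have hlog : Real.log (S * B * S).det.re = Real.log B.det.re - Real.log A.det.re := by
    have hdet : (S * B * S).det = ((A.det.re⁻¹ * B.det.re : ℝ) : ℂ) := by
      rw [det_mul, det_mul, mul_comm S.det, mul_assoc, ← det_mul, hSS, det_nonsing_inv,
        Ring.inverse_eq_inv', Complex.ofReal_mul, Complex.ofReal_inv, hA.ofReal_re_det,
        hB.ofReal_re_det, mul_comm]
    rw [hdet, Complex.ofReal_re, Real.log_mul (inv_pos.2 hA.re_det_pos).ne' hB.re_det_pos.ne',
      Real.log_inv, neg_add_eq_sub]
  have htr : (S * B * S).trace = (A⁻¹ * B).trace := by rw [trace_mul_cycle, hSS]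
  have hinv : A⁻¹ * (B - A) = A⁻¹ * B - 1 := by
    rw [mul_sub, nonsing_inv_mul _ ((isUnit_iff_isUnit_det A).1 hA.isUnit)]
  have hbound := hC.log_re_det_le_re_trace_sub_card
  rw [hlog, htr] at hbound
  rw [hinv, trace_sub, trace_one, Complex.sub_re, Complex.natCast_re]
  linarith

lemma trace_mul_mul_mul_cycle {l m R : Type*} [Fintype l] [Fintype m] [CommSemiring R]
    (M : Matrix l l R) (A : Matrix l m R) (D : Matrix m m R) (B : Matrix m l R) :
    (M * (A * D * B)).trace = (B * M * A * D).trace := by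
  rw [← Matrix.mul_assoc, trace_mul_cycle]
  simp only [Matrix.mul_assoc]

end Matrix

section Interlacing

open Filter Topology

variable {α : Type*} {f g : ℕ → α}

lemma monotone_nat_of_interlace [Preorder α] (hgf : ∀ v, 1 ≤ v → g v ≤ f v)
    (hfg : ∀ v, f v ≤ g (v + 1)) : Monotone f :=
  monotone_nat_of_le_succ fun v => (hfg v).trans (hgf (v + 1) v.succ_pos)

lemma monotoneOn_nat_Ici_one_of_interlace [Preorder α] (hgf : ∀ v, 1 ≤ v → g v ≤ f v)
    (hfg : ∀ v, f v ≤ g (v + 1)) : MonotoneOn g (Set.Ici 1) :=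
  monotoneOn_nat_Ici_of_le_succ fun v hv => (hgf v hv).trans (hfg v)

lemma tendsto_nat_of_interlace [TopologicalSpace α] [Preorder α] [OrderTopology α] {L : α}
    (hf : Tendsto f atTop (𝓝 L)) (hgf : ∀ v, 1 ≤ v → g v ≤ f v)
    (hfg : ∀ v, f v ≤ g (v + 1)) : Tendsto g atTop (𝓝 L) :=
  (tendsto_add_atTop_iff_nat 1).1 <| tendsto_of_tendsto_of_tendsto_of_le_of_le hf
    (hf.comp (tendsto_add_atTop_nat 1)) hfg fun v => hgf (v + 1) v.succ_pos

end Interlacing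

namespace SRM

section Linearization

variable {m n : ℕ} (H P : Matrix (Fin m) (Fin n) ℂ) {Q W Q' W' : Matrix (Fin n) (Fin n) ℂ}

lemma posDef_one_add_mul_mul_conjTranspose_add (hQ : Q.PosSemidef) (hW : W.PosSemidef) :
    (1 + H * Q * Hᴴ + P * W * Pᴴ).PosDef :=
  (PosDef.one.add_posSemidef (hQ.mul_mul_conjTranspose_same H)).add_posSemidef
    (hW.mul_mul_conjTranspose_same P)

lemma phik_le_phiBar (hQ : Q.PosSemidef) (hW : W.PosSemidef) (hQ' : Q'.PosSemidef)
    (hW' : W'.PosSemidef) : phik H P Q W ≤ phiBar H P Q W Q' W' := by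
  have hdiff : (1 + H * Q * Hᴴ + P * W * Pᴴ) - (1 + H * Q' * Hᴴ + P * W' * Pᴴ)
      = H * (Q - Q') * Hᴴ + P * (W - W') * Pᴴ := by
    simp only [Matrix.mul_sub, Matrix.sub_mul]; abel
  have := (posDef_one_add_mul_mul_conjTranspose_add H P hQ' hW').log_re_det_le_add_re_trace
    (posDef_one_add_mul_mul_conjTranspose_add H P hQ hW)
  rwa [hdiff, mul_add, trace_add, trace_mul_mul_mul_cycle, trace_mul_mul_mul_cycle,
    Complex.add_re, ← add_assoc] at this

lemma Ceav_le_Clk (hQ : Q.PosSemidef) (hW : W.PosSemidef) (hQ' : Q'.PosSemidef)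
    (hW' : W'.PosSemidef) : Ceav H P Q W ≤ Clk H P Q W Q' W' :=
  sub_le_sub_right (phik_le_phiBar H P hQ hW hQ' hW') _

lemma Clk_self (Q W : Matrix (Fin n) (Fin n) ℂ) : Clk H P Q W Q W = Ceav H P Q W := by
  simp [Clk, Ceav, phiBar]

end Linearization

section Subproblem

variable {n mg m0 : ℕ} {K : Type*} [Fintype K] [Nonempty K] {mk : K → ℕ}
  {H0 : Matrix (Fin m0) (Fin n) ℂ} {G : Matrix (Fin mg) (Fin n) ℂ}
  {V : Matrix (Fin n) (Fin n) ℂ} {Pmax Γ : ℝ}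
  {Hm Pm : (k : K) → Matrix (Fin (mk k)) (Fin n) ℂ}
  {Q W Q' W' : Matrix (Fin n) (Fin n) ℂ} {t : ℝ}

lemma Robj_le_Cs_of_mem_SZt (hZ' : (Q', W') ∈ SZ G V Pmax Γ)
    (hx : ((Q, W), t) ∈ SZt G V Pmax Γ Hm Pm Q' W') : Robj H0 Q t ≤ Cs H0 Hm Pm Q W :=
  sub_le_sub_left (Finset.sup'_le _ _ fun k _ =>
    (Ceav_le_Clk _ _ hx.1.1 hx.1.2.1 hZ'.1 hZ'.2.1).trans (hx.2 k)) _

/-- The witness is `((Q, W), max_k C_k(Q, W))`, feasible by `Clk_self`. -/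
lemma Cs_le_Robj_of_forall_Robj_le (hZ : (Q, W) ∈ SZ G V Pmax Γ)
    (hmax : ∀ x ∈ SZt G V Pmax Γ Hm Pm Q W, Robj H0 x.1.1 x.2 ≤ Robj H0 Q' t) :
    Cs H0 Hm Pm Q W ≤ Robj H0 Q' t :=
  hmax ((Q, W), Finset.univ.sup' Finset.univ_nonempty fun k => Ceav (Hm k) (Pm k) Q W)
    ⟨hZ, fun k => (Clk_self _ _ Q W).trans_le
      (Finset.le_sup' (fun k => Ceav (Hm k) (Pm k) Q W) (Finset.mem_univ k))⟩

end Subproblem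

theorem sca_monotone_bounded_converges_general {n mg m0 : ℕ} {K : Type*} [Fintype K] [Nonempty K]
    {mk : K → ℕ}
    (H0 : Matrix (Fin m0) (Fin n) ℂ)
    (G : Matrix (Fin mg) (Fin n) ℂ) (V : Matrix (Fin n) (Fin n) ℂ)
    (Pmax Γ : ℝ)
    (Hm Pm : (k : K) → Matrix (Fin (mk k)) (Fin n) ℂ)
    (Qs Ws : ℕ → Matrix (Fin n) (Fin n) ℂ) (ts : ℕ → ℝ)
    (h0 : (Qs 0, Ws 0) ∈ SZ G V Pmax Γ)
    (hbdd : BddAbove ((fun Z => Cs H0 Hm Pm Z.1 Z.2) '' SZ G V Pmax Γ))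
    (hiter : ∀ v : ℕ, 1 ≤ v →
      ((Qs v, Ws v), ts v) ∈ SZt G V Pmax Γ Hm Pm (Qs (v - 1)) (Ws (v - 1)) ∧
      ∀ x ∈ SZt G V Pmax Γ Hm Pm (Qs (v - 1)) (Ws (v - 1)),
        Robj H0 x.1.1 x.2 ≤ Robj H0 (Qs v) (ts v)) :
    (∀ v w : ℕ, 1 ≤ v → v ≤ w →
      Cs H0 Hm Pm (Qs v) (Ws v) ≤ Cs H0 Hm Pm (Qs w) (Ws w)) ∧
    (∀ v : ℕ, 1 ≤ v →
      Cs H0 Hm Pm (Qs v) (Ws v) ≤ sSup ((fun Z => Cs H0 Hm Pm Z.1 Z.2) '' SZ G V Pmax Γ)) ∧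
    (∀ v w : ℕ, 1 ≤ v → v ≤ w → Robj H0 (Qs v) (ts v) ≤ Robj H0 (Qs w) (ts w)) ∧
    (∀ v : ℕ, 1 ≤ v →
      Robj H0 (Qs v) (ts v) ≤ sSup ((fun Z => Cs H0 Hm Pm Z.1 Z.2) '' SZ G V Pmax Γ)) ∧
    (∃ L : ℝ, Filter.Tendsto (fun v => Cs H0 Hm Pm (Qs v) (Ws v)) Filter.atTop (nhds L)) ∧
    (∃ L : ℝ, Filter.Tendsto (fun v => Robj H0 (Qs v) (ts v)) Filter.atTop (nhds L)) := by
  have hZ : ∀ v, (Qs v, Ws v) ∈ SZ G V Pmax Γ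
    | 0 => h0
    | v + 1 => (hiter (v + 1) v.succ_pos).1.1
  have hR_le_Cs : ∀ v, 1 ≤ v → Robj H0 (Qs v) (ts v) ≤ Cs H0 Hm Pm (Qs v) (Ws v) :=
    fun v hv => Robj_le_Cs_of_mem_SZt (hZ (v - 1)) (hiter v hv).1
  have hCs_le_R : ∀ v, Cs H0 Hm Pm (Qs v) (Ws v) ≤ Robj H0 (Qs (v + 1)) (ts (v + 1)) :=
    fun v => Cs_le_Robj_of_forall_Robj_le (hZ v)
      (by simpa only [Nat.add_sub_cancel] using (hiter (v + 1) v.succ_pos).2)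
  have hCs_le : ∀ v, Cs H0 Hm Pm (Qs v) (Ws v) ≤
      sSup ((fun Z => Cs H0 Hm Pm Z.1 Z.2) '' SZ G V Pmax Γ) :=
    fun v => le_csSup hbdd ⟨_, hZ v, rfl⟩
  have hmono := monotone_nat_of_interlace hR_le_Cs hCs_le_R
  have hL := tendsto_atTop_ciSup hmono ⟨_, Set.forall_mem_range.2 hCs_le⟩
  exact ⟨fun v w _ hvw => hmono hvw, fun v _ => hCs_le v,
    fun v w hv hvw => monotoneOn_nat_Ici_one_of_interlace hR_le_Cs hCs_le_R hv (hv.trans hvw) hvw,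
    fun v hv => (hR_le_Cs v hv).trans (hCs_le v), ⟨_, hL⟩,
    ⟨_, tendsto_nat_of_interlace hL hR_le_Cs hCs_le_R⟩⟩

/-- Proposition 2(i): under the SCA iteration, both `v ↦ C_s(Q^v,W^v)`
and `v ↦ R(Q^v,t^v)` (for `v ≥ 1`) are monotone nondecreasing and bounded above by
`C_s^*`, hence each converges to a real limit. -/
theorem sca_monotone_bounded_converges {n mg m0 : ℕ} {K : Type*} [Fintype K] [Nonempty K]
    {mk : K → ℕ} (hn : 0 < n)
    (H0 : Matrix (Fin m0) (Fin n) ℂ)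
    (G : Matrix (Fin mg) (Fin n) ℂ) (V : Matrix (Fin n) (Fin n) ℂ)
    (Pmax Γ : ℝ) (hPmax : 0 ≤ Pmax) (hΓ : 0 ≤ Γ)
    (Hm Pm : (k : K) → Matrix (Fin (mk k)) (Fin n) ℂ)
    (Qs Ws : ℕ → Matrix (Fin n) (Fin n) ℂ) (ts : ℕ → ℝ)
    (h0 : (Qs 0, Ws 0) ∈ SZ G V Pmax Γ)
    (hbdd : BddAbove ((fun Z => Cs H0 Hm Pm Z.1 Z.2) '' SZ G V Pmax Γ))
    (hiter : ∀ v : ℕ, 1 ≤ v →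
      ((Qs v, Ws v), ts v) ∈ SZt G V Pmax Γ Hm Pm (Qs (v - 1)) (Ws (v - 1)) ∧
      ∀ x ∈ SZt G V Pmax Γ Hm Pm (Qs (v - 1)) (Ws (v - 1)),
        Robj H0 x.1.1 x.2 ≤ Robj H0 (Qs v) (ts v)) :
    (∀ v w : ℕ, 1 ≤ v → v ≤ w →
      Cs H0 Hm Pm (Qs v) (Ws v) ≤ Cs H0 Hm Pm (Qs w) (Ws w)) ∧
    (∀ v : ℕ, 1 ≤ v →
      Cs H0 Hm Pm (Qs v) (Ws v) ≤ sSup ((fun Z => Cs H0 Hm Pm Z.1 Z.2) '' SZ G V Pmax Γ)) ∧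
    (∀ v w : ℕ, 1 ≤ v → v ≤ w → Robj H0 (Qs v) (ts v) ≤ Robj H0 (Qs w) (ts w)) ∧
    (∀ v : ℕ, 1 ≤ v →
      Robj H0 (Qs v) (ts v) ≤ sSup ((fun Z => Cs H0 Hm Pm Z.1 Z.2) '' SZ G V Pmax Γ)) ∧
    (∃ L : ℝ, Filter.Tendsto (fun v => Cs H0 Hm Pm (Qs v) (Ws v)) Filter.atTop (nhds L)) ∧
    (∃ L : ℝ, Filter.Tendsto (fun v => Robj H0 (Qs v) (ts v)) Filter.atTop (nhds L)) :=
  sca_monotone_bounded_converges_general H0 G V Pmax Γ Hm Pm Qs Ws ts h0 hbdd hiter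

end SRM
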